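/- For each j ∈ {0,…,5}, the involution τ maps the eigenspace g_j bijectively onto g_{−j}, where indices are taken modulo 6; that is, τ(g_j) = g_{6−j mod 6} for j = 0, 1, …, 5. -/
import Mathlib


open Complex Matrix

noncomputable section

abbrev M3 := Matrix (Fin 3) (Fin 3) ℂ

/-- ε = exp(iπ/3). -/
def eps : ℂ := Complex.exp (Real.pi * Complex.I / 3)

/-- The matrix P with rows (0, ε², 0), (ε⁴, 0, 0), (0, 0, 1). -/
def Pm : M3 := !![0, eps ^ 2, 0; eps ^ 4, 0, 0; 0, 0, 1]

/-- σ(X) = −P Xᵀ P. -/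
def sigmaL (X : M3) : M3 := -(Pm * Xᵀ * Pm)

/-- τ(X) = −conj(X)ᵀ. -/
def tauL (X : M3) : M3 := -Xᴴ

/-- The eigenspace g_k = {X ∈ sl(3,ℂ) : σ(X) = εᵏ X}. -/
def gk (k : ℕ) : Set M3 := {X : M3 | X.trace = 0 ∧ sigmaL X = eps ^ k • X}

lemma eps6 : eps ^ 6 = 1 := by
  rw [eps, ← Complex.exp_nat_mul,
    show ((6:ℕ):ℂ) * (↑Real.pi * Complex.I / 3) = 2 * ↑Real.pi * Complex.I by push_cast; ring,
    Complex.exp_two_pi_mul_I]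

lemma conj_eps : (starRingEnd ℂ) eps = eps ^ 5 := by
  have h1 : (starRingEnd ℂ) eps = Complex.exp (-(↑Real.pi * Complex.I / 3)) := by
    rw [eps, ← Complex.exp_conj]
    congr 1
    simp [map_div₀, Complex.conj_I, map_ofNat]
    ring
  have h2 : eps ^ 5 = Complex.exp (-(↑Real.pi * Complex.I / 3) + 2 * ↑Real.pi * Complex.I) := by
    rw [eps, ← Complex.exp_nat_mul]
    congr 1
    push_cast
    ring
  rw [h1, h2, Complex.exp_add, Complex.exp_two_pi_mul_I, mul_one]

lemma eps_pow_mod (a b : ℕ) (h : a % 6 = b % 6) : eps ^ a = eps ^ b := by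
  have key : ∀ n : ℕ, eps ^ n = eps ^ (n % 6) := by
    intro n
    conv_lhs => rw [← Nat.div_add_mod n 6]
    rw [pow_add, pow_mul, eps6, one_pow, one_mul]
  rw [key a, key b, h]

lemma conj_eps_pow (j : ℕ) : (starRingEnd ℂ) (eps ^ j) = eps ^ ((5 * j) % 6) := by
  rw [map_pow, conj_eps, ← pow_mul]
  exact eps_pow_mod _ _ (by omega)

lemma hP : Pmᴴ = Pm := by
  have h2 : (starRingEnd ℂ) eps ^ 2 = eps ^ 4 := by
    rw [← map_pow, conj_eps_pow]
  have h4 : (starRingEnd ℂ) eps ^ 4 = eps ^ 2 := by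
    rw [← map_pow, conj_eps_pow]
  ext i j
  fin_cases i <;> fin_cases j <;>
    simp [Pm, conjTranspose_apply, h2, h4, Matrix.vecHead, Matrix.vecTail]

lemma sigma_tau (X : M3) : sigmaL (tauL X) = tauL (sigmaL X) := by
  simp only [sigmaL, tauL, transpose_neg, conjTranspose_neg, neg_neg, mul_neg, neg_mul,
    conjTranspose_mul, hP]
  have key : Xᴴᵀ = Xᵀᴴ := by
    ext i j
    simp [conjTranspose_apply, transpose_apply]
  rw [key, mul_assoc]

lemma tau_tau (X : M3) : tauL (tauL X) = X := by
  simp [tauL]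

lemma tau_mem {X : M3} {j m : ℕ} (h : (5 * j) % 6 = m % 6) (hX : X ∈ gk j) :
    tauL X ∈ gk m := by
  obtain ⟨h1, h2⟩ := hX
  constructor
  · simp [tauL, trace_conjTranspose, h1]
  · rw [sigma_tau, h2]
    simp only [tauL, conjTranspose_smul, neg_smul, smul_neg, star_def]
    rw [conj_eps_pow, eps_pow_mod (5 * j % 6) m (by omega)]

/-- τ maps g_j bijectively onto g_{−j} (indices modulo 6). -/
theorem statement9 :
    ∀ j : ℕ, j ≤ 5 → tauL '' gk j = gk ((6 - j) % 6) := by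
  intro j hj
  ext X
  simp only [Set.mem_image]
  constructor
  · rintro ⟨Y, hY, rfl⟩
    exact tau_mem (by omega) hY
  · intro hX
    exact ⟨tauL X, tau_mem (by omega) hX, tau_tau X⟩
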